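/- If −√(g h_r) ≤ v_r < 2√(g h_r), then the point h⁻ := (2√(g h_r) − v_r)²/(9g) satisfies 0 < h⁻ ≤ h_r, the value of the discharge-form inverse Lax curve there lies on the lower critical curve, φ̃_r(h⁻) = −h⁻·√(g h⁻), and h⁻ is the unique global minimum point of φ̃_r on (0,∞): φ̃_r(h) > φ̃_r(h⁻) for every h > 0 with h ≠ h⁻. -/

import Mathlib

/-- Inverse Lax curve through the right state `(hr, vr)`. -/
noncomputable def phir (g hr vr h : ℝ) : ℝ :=
  if h ≤ hr then vr - 2 * Real.sqrt (g * hr) + 2 * Real.sqrt (g * h)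
  else vr + (h - hr) * Real.sqrt (g * (h + hr) / (2 * h * hr))

/-- Discharge-form inverse Lax curve through the right state. -/
noncomputable def phirTilde (g hr vr h : ℝ) : ℝ := h * phir g hr vr h

/-!
Write `c = 2√(g h_r) − v_r > 0`. Extending the rarefaction branch to all depths gives a lower
bound `φ_r(h) ≥ v_r − 2√(g h_r) + 2√(g h)`, with equality for `h ≤ h_r`: on the shock part,
with `a = √h` and `b = √h_r`, this reduces to `8a²b² ≤ (a + b)²(a² + b²)`. In the variable
`t = √(g h)` the discharge of the extended rarefaction branch is `t²(2t − c)/g`, and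
`t²(2t − c) + c³/27 = (t − c/3)²(2t + c/3)` shows that it has its unique minimum at `t = c/3`,
i.e. at `h⁻`, which lies on the rarefaction part because `c ≤ 3√(g h_r)`.
-/

noncomputable def phirRarefaction (g hr vr h : ℝ) : ℝ :=
  vr - 2 * Real.sqrt (g * hr) + 2 * Real.sqrt (g * h)

lemma phir_of_le {g hr vr h : ℝ} (hh : h ≤ hr) :
    phir g hr vr h = phirRarefaction g hr vr h :=
  if_pos hh

lemma two_sqrt_mul_sub_le_shock {g hr h : ℝ} (hg : 0 ≤ g) (hhr : 0 < hr) (hh : hr < h) :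
    2 * Real.sqrt (g * h) - 2 * Real.sqrt (g * hr) ≤
      (h - hr) * Real.sqrt (g * (h + hr) / (2 * h * hr)) := by
  obtain ⟨b, hb, rfl⟩ : ∃ b, 0 < b ∧ hr = b ^ 2 :=
    ⟨√hr, Real.sqrt_pos.2 hhr, (Real.sq_sqrt hhr.le).symm⟩
  obtain ⟨a, ha, rfl⟩ : ∃ a, 0 < a ∧ h = a ^ 2 :=
    ⟨√h, Real.sqrt_pos.2 (hhr.trans hh), (Real.sq_sqrt (hhr.trans hh).le).symm⟩
  rw [Real.sqrt_mul hg, Real.sqrt_mul hg, Real.sqrt_sq ha.le, Real.sqrt_sq hb.le,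
    ← Real.sqrt_sq (sub_nonneg.2 hh.le), ← Real.sqrt_mul (sq_nonneg _)]
  apply Real.le_sqrt_of_sq_le
  rw [mul_div_assoc', le_div_iff₀ (by positivity)]
  have hg' : (√g) ^ 2 = g := Real.sq_sqrt hg
  have key : (a ^ 2 - b ^ 2) ^ 2 * (g * (a ^ 2 + b ^ 2)) -
      (2 * (√g * a) - 2 * (√g * b)) ^ 2 * (2 * a ^ 2 * b ^ 2) =
      g * ((a - b) ^ 4 * (a ^ 2 + 4 * a * b + b ^ 2)) := by
    linear_combination (-(8 * (a - b) ^ 2 * a ^ 2 * b ^ 2)) * hg'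
  linarith [show 0 ≤ g * ((a - b) ^ 4 * (a ^ 2 + 4 * a * b + b ^ 2)) by positivity]

lemma phirRarefaction_le_phir {g hr vr h : ℝ} (hg : 0 ≤ g) (hhr : 0 < hr) :
    phirRarefaction g hr vr h ≤ phir g hr vr h := by
  rcases le_or_gt h hr with hle | hlt
  · exact (phir_of_le hle).ge
  · rw [phir, if_neg hlt.not_ge, phirRarefaction]
    linarith [two_sqrt_mul_sub_le_shock hg hhr hlt]

lemma sqrt_mul_sq_div {g c : ℝ} (hg : 0 < g) (hc : 0 ≤ c) :
    Real.sqrt (g * (c ^ 2 / (9 * g))) = c / 3 := by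
  rw [show g * (c ^ 2 / (9 * g)) = (c / 3) ^ 2 by field_simp; ring, Real.sqrt_sq (by positivity)]

lemma sq_mul_two_mul_sub_add_pos {c t : ℝ} (hc : 0 ≤ c) (ht : 0 < t) (hne : t ≠ c / 3) :
    0 < t ^ 2 * (2 * t - c) + c ^ 3 / 27 := by
  have hsq : 0 < (t - c / 3) ^ 2 := sq_pos_of_ne_zero (sub_ne_zero.2 hne)
  calc 0 < (t - c / 3) ^ 2 * (2 * t + c / 3) := mul_pos hsq (by positivity)
    _ = t ^ 2 * (2 * t - c) + c ^ 3 / 27 := by ring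

lemma neg_mul_lt_mul_two_sqrt_mul_sub {g c h : ℝ} (hg : 0 < g) (hc : 0 ≤ c) (hh : 0 < h)
    (hne : h ≠ c ^ 2 / (9 * g)) :
    -(c ^ 2 / (9 * g) * (c / 3)) < h * (2 * Real.sqrt (g * h) - c) := by
  set t := Real.sqrt (g * h)
  have ht : t ^ 2 = g * h := Real.sq_sqrt (by positivity)
  have htne : t ≠ c / 3 := by
    intro htc
    rw [htc] at ht
    apply hne
    rw [eq_div_iff (by positivity)]
    linear_combination -9 * ht
  have hcubic := sq_mul_two_mul_sub_add_pos hc (Real.sqrt_pos.2 (by positivity)) htne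
  have key : g * (h * (2 * t - c) + c ^ 2 / (9 * g) * (c / 3)) =
      t ^ 2 * (2 * t - c) + c ^ 3 / 27 := by
    rw [ht]; field_simp; ring
  have := pos_of_mul_pos_right (key ▸ hcubic) hg.le
  linarith

/-- If `−√(g h_r) ≤ v_r < 2√(g h_r)`, then `h⁻ = (2√(g h_r) − v_r)²/(9g)` lies in
`(0, h_r]`, the discharge-form inverse Lax curve meets the lower critical curve
there, and `h⁻` is the unique global minimum point of `φ̃_r` on `(0, ∞)`. -/
theorem phirTilde_min_at_critical (g hr vr : ℝ) (hg : 0 < g) (hhr : 0 < hr)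
    (hv₁ : -Real.sqrt (g * hr) ≤ vr) (hv₂ : vr < 2 * Real.sqrt (g * hr)) :
    0 < (2 * Real.sqrt (g * hr) - vr) ^ 2 / (9 * g) ∧
    (2 * Real.sqrt (g * hr) - vr) ^ 2 / (9 * g) ≤ hr ∧
    phirTilde g hr vr ((2 * Real.sqrt (g * hr) - vr) ^ 2 / (9 * g)) =
      -(((2 * Real.sqrt (g * hr) - vr) ^ 2 / (9 * g)) *
        Real.sqrt (g * ((2 * Real.sqrt (g * hr) - vr) ^ 2 / (9 * g)))) ∧
    ∀ h : ℝ, 0 < h → h ≠ (2 * Real.sqrt (g * hr) - vr) ^ 2 / (9 * g) →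
      phirTilde g hr vr h >
        phirTilde g hr vr ((2 * Real.sqrt (g * hr) - vr) ^ 2 / (9 * g)) := by
  set s := Real.sqrt (g * hr)
  set c := 2 * s - vr
  have hc : 0 < c := by linarith
  have hcrit := sqrt_mul_sq_div hg hc.le
  have hle : c ^ 2 / (9 * g) ≤ hr := by
    have hs : s ^ 2 = g * hr := Real.sq_sqrt (by positivity)
    rw [div_le_iff₀ (by positivity)]
    nlinarith [mul_self_le_mul_self hc.le (show c ≤ 3 * s by linarith)]
  have hval : phirTilde g hr vr (c ^ 2 / (9 * g)) = -(c ^ 2 / (9 * g) * (c / 3)) := by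
    rw [phirTilde, phir_of_le hle, phirRarefaction, hcrit]
    ring
  refine ⟨by positivity, hle, hcrit ▸ hval, fun h hh hne => ?_⟩
  calc phirTilde g hr vr (c ^ 2 / (9 * g)) < h * (2 * Real.sqrt (g * h) - c) :=
        hval ▸ neg_mul_lt_mul_two_sqrt_mul_sub hg hc.le hh hne
    _ = h * phirRarefaction g hr vr h := by rw [phirRarefaction]; ring
    _ ≤ phirTilde g hr vr h :=
        mul_le_mul_of_nonneg_left (phirRarefaction_le_phir hg.le hhr) hh.le
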